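/- arXiv:2302.11124 — 5 statements merged into one kernel-verified Lean document; each statement's English description precedes it below -/
import Mathlib

section
/- Let p ≥ 2, let ξ, ν ∈ ℝ^p be unit vectors with ξᵀν = 0, let a > 1, η > 0 and 0 < ε < 1/2, and set Σ = a ξξᵀ + (I_p − ξξᵀ) and Σ_ε^{cdm} = ((1−2ε)Σ + 2εη ννᵀ) Σ. Then Σ_ε^{cdm} = (1−2ε)a² ξξᵀ + (1−2ε+2εη) ννᵀ + (1−2ε)(I_p − ξξᵀ − ννᵀ). Moreover, if η > ((1−2ε)/(2ε))(a²−1), then ν is the leading eigenvector of Σ_ε^{cdm}: for every unit vector w ∈ ℝ^p with νᵀw = 0 one has wᵀ Σ_ε^{cdm} w < νᵀ Σ_ε^{cdm} ν = 1−2ε+2εη. -/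
/-!
With `P = ξξᵀ` and `Q = ννᵀ` one has `P² = P` and `QP = 0`, so `Σ = aP + (1 - P)` satisfies
`Σ² = a²P + (1 - P)` and `QΣ = Q`; this gives the decomposition of `Σ_ε^{cdm}`. For a unit
vector `w ⊥ ν` the quadratic form is then `(1-2ε)(1 + (a²-1)(ξᵀw)²) ≤ (1-2ε)a²` by
Cauchy–Schwarz, and the condition on `η` says exactly that `(1-2ε)a² < 1-2ε+2εη`.
-/

open Matrix

section Algebra

variable {R A : Type*} [CommRing R] [Ring A] [Algebra R A]

theorem smul_add_smul_mul_eq_of_isIdempotentElem {P Q : A} (hP : IsIdempotentElem P)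
    (hQP : Q * P = 0) (a b d : R) :
    (b • (a • P + (1 - P)) + d • Q) * (a • P + (1 - P)) =
      (b * a ^ 2) • P + (b + d) • Q + b • (1 - P - Q) := by
  simp only [add_mul, mul_add, smul_mul_assoc, mul_smul_comm, sub_mul, mul_sub, one_mul,
    mul_one, smul_add, smul_sub, smul_smul, hP.eq, hQP, smul_zero]
  module

end Algebra

section DotProduct

variable {n R : Type*} [Fintype n]

theorem isIdempotentElem_vecMulVec_self [CommRing R] {v : n → R} (hv : v ⬝ᵥ v = 1) :
    IsIdempotentElem (vecMulVec v v) := by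
  rw [IsIdempotentElem, vecMulVec_mul_vecMulVec, hv, one_smul]

theorem vecMulVec_mul_vecMulVec_of_dotProduct_eq_zero [CommRing R] (u : n → R) {v w : n → R}
    (x : n → R) (hvw : v ⬝ᵥ w = 0) : vecMulVec u v * vecMulVec w x = 0 := by
  rw [vecMulVec_mul_vecMulVec, hvw, zero_smul, vecMulVec_zero]

theorem dotProduct_vecMulVec_self_mulVec [CommRing R] (u w : n → R) :
    w ⬝ᵥ vecMulVec u u *ᵥ w = (u ⬝ᵥ w) ^ 2 := by
  rw [dotProduct_mulVec, vecMul_vecMulVec, smul_dotProduct, smul_eq_mul, dotProduct_comm w u, sq]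

theorem dotProduct_sq_le [CommRing R] [LinearOrder R] [IsStrictOrderedRing R] (u w : n → R) :
    (u ⬝ᵥ w) ^ 2 ≤ (u ⬝ᵥ u) * (w ⬝ᵥ w) := by
  simpa only [dotProduct, sq] using Finset.sum_mul_sq_le_sq_mul_sq Finset.univ u w

theorem dotProduct_mulVec_smul_add_smul_add_smul [DecidableEq n] [CommRing R]
    (ξ ν w : n → R) (α β γ : R) :
    w ⬝ᵥ (α • vecMulVec ξ ξ + β • vecMulVec ν ν + γ • (1 - vecMulVec ξ ξ - vecMulVec ν ν)) *ᵥ w =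
      α * (ξ ⬝ᵥ w) ^ 2 + β * (ν ⬝ᵥ w) ^ 2 + γ * (w ⬝ᵥ w - (ξ ⬝ᵥ w) ^ 2 - (ν ⬝ᵥ w) ^ 2) := by
  simp only [add_mulVec, smul_mulVec, sub_mulVec, one_mulVec, dotProduct_add, dotProduct_smul,
    dotProduct_sub, dotProduct_vecMulVec_self_mulVec, smul_eq_mul]

end DotProduct

theorem stmt1_general (p : ℕ) (ξ ν : Fin p → ℝ)
    (hξ : ξ ⬝ᵥ ξ = 1) (hν : ν ⬝ᵥ ν = 1) (hξν : ξ ⬝ᵥ ν = 0)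
    (a η ε : ℝ) (ha : 1 < a) (hε0 : 0 < ε) (hε1 : ε < 1 / 2)
    (Sig Scdm : Matrix (Fin p) (Fin p) ℝ)
    (hSig : Sig = a • vecMulVec ξ ξ + (1 - vecMulVec ξ ξ))
    (hScdm : Scdm = ((1 - 2 * ε) • Sig + (2 * ε * η) • vecMulVec ν ν) * Sig) :
    Scdm = ((1 - 2 * ε) * a ^ 2) • vecMulVec ξ ξ +
        (1 - 2 * ε + 2 * ε * η) • vecMulVec ν ν +
        (1 - 2 * ε) • (1 - vecMulVec ξ ξ - vecMulVec ν ν) ∧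
    (η > (1 - 2 * ε) / (2 * ε) * (a ^ 2 - 1) →
      ν ⬝ᵥ Scdm.mulVec ν = 1 - 2 * ε + 2 * ε * η ∧
      ∀ w : Fin p → ℝ, w ⬝ᵥ w = 1 → ν ⬝ᵥ w = 0 →
        w ⬝ᵥ Scdm.mulVec w < 1 - 2 * ε + 2 * ε * η) := by
  have hdec : Scdm = ((1 - 2 * ε) * a ^ 2) • vecMulVec ξ ξ +
      (1 - 2 * ε + 2 * ε * η) • vecMulVec ν ν +
      (1 - 2 * ε) • (1 - vecMulVec ξ ξ - vecMulVec ν ν) := by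
    rw [hScdm, hSig]
    exact smul_add_smul_mul_eq_of_isIdempotentElem (isIdempotentElem_vecMulVec_self hξ)
      (vecMulVec_mul_vecMulVec_of_dotProduct_eq_zero ν ξ (by rwa [dotProduct_comm])) a _ _
  refine ⟨hdec, fun hη_large => ⟨?_, fun w hw hνw => ?_⟩⟩
  · rw [hdec, dotProduct_mulVec_smul_add_smul_add_smul, hξν, hν]
    ring
  · rw [hdec, dotProduct_mulVec_smul_add_smul_add_smul, hνw, hw]
    have hξw : (ξ ⬝ᵥ w) ^ 2 ≤ 1 := by simpa only [hξ, hw, one_mul] using dotProduct_sq_le ξ w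
    have hgap : (1 - 2 * ε) * (a ^ 2 - 1) < 2 * ε * η := by
      rwa [gt_iff_lt, div_mul_eq_mul_div, div_lt_iff₀ (by positivity), mul_comm η] at hη_large
    have hcoef : 0 ≤ (1 - 2 * ε) * (a ^ 2 - 1) := mul_nonneg (by linarith) (by nlinarith)
    nlinarith [mul_le_mul_of_nonneg_left hξw hcoef]

/-- Example 2 (CDM-PCA): the contaminated product covariance
`Σ_ε^{cdm} = ((1-2ε)Σ + 2εη ννᵀ) Σ` decomposes as
`(1-2ε)a² ξξᵀ + (1-2ε+2εη) ννᵀ + (1-2ε)(I - ξξᵀ - ννᵀ)`, and whenever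
`η > ((1-2ε)/(2ε))(a²-1)`, `ν` is the leading eigenvector. -/
theorem stmt1 (p : ℕ) (hp : 2 ≤ p) (ξ ν : Fin p → ℝ)
    (hξ : ξ ⬝ᵥ ξ = 1) (hν : ν ⬝ᵥ ν = 1) (hξν : ξ ⬝ᵥ ν = 0)
    (a η ε : ℝ) (ha : 1 < a) (hη : 0 < η) (hε0 : 0 < ε) (hε1 : ε < 1 / 2)
    (Sig Scdm : Matrix (Fin p) (Fin p) ℝ)
    (hSig : Sig = a • vecMulVec ξ ξ + (1 - vecMulVec ξ ξ))
    (hScdm : Scdm = ((1 - 2 * ε) • Sig + (2 * ε * η) • vecMulVec ν ν) * Sig) :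
    Scdm = ((1 - 2 * ε) * a ^ 2) • vecMulVec ξ ξ +
        (1 - 2 * ε + 2 * ε * η) • vecMulVec ν ν +
        (1 - 2 * ε) • (1 - vecMulVec ξ ξ - vecMulVec ν ν) ∧
    (η > (1 - 2 * ε) / (2 * ε) * (a ^ 2 - 1) →
      ν ⬝ᵥ Scdm.mulVec ν = 1 - 2 * ε + 2 * ε * η ∧
      ∀ w : Fin p → ℝ, w ⬝ᵥ w = 1 → ν ⬝ᵥ w = 0 →
        w ⬝ᵥ Scdm.mulVec w < 1 - 2 * ε + 2 * ε * η) :=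
  stmt1_general p ξ ν hξ hν hξν a η ε ha hε0 hε1 Sig Scdm hSig hScdm
end

section
/- For all real numbers a and ε with a > 1 and 0 < ε < 1/2, the inequality ((1−2ε)/(2ε))(a²−1) > ((1−ε)/ε)(a−1) holds if and only if a > 1/(1−2ε). -/
/-- Condition (5): the CDM-PCA critical contamination strength exceeds the PCA one
iff `a > 1/(1-2ε)`. -/
theorem stmt2 (a ε : ℝ) (ha : 1 < a) (hε0 : 0 < ε) (hε1 : ε < 1 / 2) :
    (1 - 2 * ε) / (2 * ε) * (a ^ 2 - 1) > (1 - ε) / ε * (a - 1) ↔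
      a > 1 / (1 - 2 * ε) := by
  have h2 : 0 < 1 - 2 * ε := by linarith
  have ha1 : 0 < a - 1 := by linarith
  have key : ((1 - ε) / ε * (a - 1) < (1 - 2 * ε) / (2 * ε) * (a ^ 2 - 1)) ↔ 1 < (1 - 2 * ε) * a := by
    rw [div_mul_eq_mul_div, div_mul_eq_mul_div,
      div_lt_div_iff₀ hε0 (by linarith : (0:ℝ) < 2 * ε)]
    constructor
    · intro h
      nlinarith [mul_pos hε0 ha1, mul_pos (mul_pos hε0 ha1) h2]
    · intro h
      nlinarith [mul_pos hε0 ha1, mul_pos (mul_pos hε0 ha1) h2]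
  rw [gt_iff_lt, key, gt_iff_lt, div_lt_iff₀ h2, mul_comm]
end

section
/- There exist ε₀ > 0 and functions μ : [0, ε₀) → ℝ and v : [0, ε₀) → ℝ^p with μ(0) = λⱼ, v(0) = γⱼ, ‖v(ε)‖ = 1 and A(ε) v(ε) = μ(ε) v(ε) for all ε ∈ [0, ε₀), such that, as ε → 0⁺, γⱼᵀ v(ε) = 1 − (ε²/2) (γⱼᵀ x)² · ( Σ_{ℓ ≠ j} (γ_ℓᵀ x)² / (λⱼ − λ_ℓ)² ) + o(ε²). (This is the PCA eigenvector perturbation in Theorem 2; the sum Σ_{ℓ≠j} (γ_ℓᵀx)²/(λⱼ−λ_ℓ)² equals xᵀ Mⱼ² x with Mⱼ = (λⱼ I_p − Σ)⁺.) -/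
open Matrix Asymptotics Filter Topology

/-!
Write `A(ε) = Σ + ε (x xᵀ - Σ)`. Since `λⱼ` is a simple eigenvalue of the symmetric matrix `Σ`,
the implicit function theorem applied to `(ε, v, μ) ↦ (A(ε) v - μ v, v ⬝ᵥ v - 1)` at
`(0, γⱼ, λⱼ)` yields a differentiable branch of unit eigenvectors `v(ε) = γⱼ + ε w + o(ε)`, where
first-order perturbation theory gives `w = (γⱼ ⬝ᵥ x) Mⱼ x`. As `v(ε)` and `γⱼ` are unit vectors,
`γⱼ ⬝ᵥ v(ε) = 1 - ‖v(ε) - γⱼ‖² / 2 = 1 - ε² ‖w‖² / 2 + o(ε²)`, and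
`‖w‖² = (γⱼ ⬝ᵥ x)² ∑_{ℓ ≠ j} (γ_ℓ ⬝ᵥ x)² / (λⱼ - λ_ℓ)²` by orthonormality.
-/

theorem Asymptotics.IsLittleO.dotProduct_isBigO {α n : Type*} [Fintype n] {l : Filter α}
    {f g : α → n → ℝ} {f' g' : α → ℝ} (hf : f =o[l] f') (hg : g =O[l] g') :
    (fun a => f a ⬝ᵥ g a) =o[l] fun a => f' a * g' a := by
  have hcoord : ∀ i, (fun a => f a i * g a i) =o[l] fun a => f' a * g' a := fun i =>
    ((isBigO_of_le _ fun a => norm_le_pi_norm (f a) i).trans_isLittleO hf).mul_isBigO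
      ((isBigO_of_le _ fun a => norm_le_pi_norm (g a) i).trans hg)
  simpa only [dotProduct, Finset.sum_fn] using
    IsLittleO.sum fun i (_ : i ∈ Finset.univ) => hcoord i

theorem HasDerivAt.isLittleO_dotProduct_apply_zero_sub {n : Type*} [Fintype n]
    {v : ℝ → n → ℝ} {w : n → ℝ}
    (hv : HasDerivAt v w 0) (hunit : ∀ᶠ ε in 𝓝 0, v ε ⬝ᵥ v ε = 1) :
    (fun ε => v 0 ⬝ᵥ v ε - (1 - ε ^ 2 / 2 * (w ⬝ᵥ w))) =o[𝓝 0] fun ε => ε ^ 2 := by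
  have hr : (fun ε => v ε - v 0 - ε • w) =o[𝓝 0] fun ε => ε := by
    simpa only [zero_add] using hasDerivAt_iff_isLittleO_nhds_zero.mp hv
  have hs : (fun ε => v ε - v 0 + ε • w) =O[𝓝 0] fun ε => ε := by
    have h2w : (fun ε : ℝ => ε • (2 • w)) =O[𝓝 0] fun ε => ε :=
      isBigO_of_le' _ fun ε => by rw [norm_smul, mul_comm]
    refine (hr.isBigO.add h2w).congr_left fun ε => ?_
    module
  have hu : v 0 ⬝ᵥ v 0 = 1 := hunit.self_of_nhds
  refine ((hr.dotProduct_isBigO hs).const_mul_left (-1 / 2)).congr' ?_ (by simp [sq])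
  filter_upwards [hunit] with ε hε
  simp only [sub_dotProduct, dotProduct_sub, dotProduct_add, smul_dotProduct,
    dotProduct_smul, smul_eq_mul, dotProduct_comm (v ε) (v 0), dotProduct_comm w, hε, hu]
  ring

namespace Matrix

variable {n : Type*} [Fintype n]

def eigenEquation (S M : Matrix n n ℝ) (q : ℝ × (n → ℝ) × ℝ) : (n → ℝ) × ℝ :=
  ((S + q.1 • M) *ᵥ q.2.1 - q.2.2 • q.2.1, q.2.1 ⬝ᵥ q.2.1 - 1)

noncomputable def eigenEquationDeriv (S M : Matrix n n ℝ) (v₀ : n → ℝ) (μ₀ : ℝ) :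
    ℝ × (n → ℝ) × ℝ →L[ℝ] (n → ℝ) × ℝ :=
  LinearMap.toContinuousLinearMap
    { toFun := fun d =>
        (d.1 • (M *ᵥ v₀) + S *ᵥ d.2.1 - μ₀ • d.2.1 - d.2.2 • v₀, 2 * (v₀ ⬝ᵥ d.2.1))
      map_add' := fun d d' => by
        simp only [Prod.fst_add, Prod.snd_add, mulVec_add, dotProduct_add, Prod.mk_add_mk,
          Prod.mk.injEq]
        constructor
        · module
        · ring
      map_smul' := fun t d => by
        simp only [Prod.smul_fst, Prod.smul_snd, mulVec_smul, dotProduct_smul,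
          RingHom.id_apply, Prod.smul_mk, smul_eq_mul, Prod.mk.injEq]
        constructor
        · module
        · ring }

@[simp]
theorem eigenEquationDeriv_apply (S M : Matrix n n ℝ) (v₀ : n → ℝ) (μ₀ : ℝ)
    (d : ℝ × (n → ℝ) × ℝ) :
    eigenEquationDeriv S M v₀ μ₀ d =
      (d.1 • (M *ᵥ v₀) + S *ᵥ d.2.1 - μ₀ • d.2.1 - d.2.2 • v₀, 2 * (v₀ ⬝ᵥ d.2.1)) :=
  rfl

theorem hasStrictFDerivAt_eigenEquation (S M : Matrix n n ℝ) (v₀ : n → ℝ) (μ₀ : ℝ) :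
    HasStrictFDerivAt (eigenEquation S M) (eigenEquationDeriv S M v₀ μ₀) (0, v₀, μ₀) := by
  set q₀ : ℝ × (n → ℝ) × ℝ := (0, v₀, μ₀)
  let ε : ℝ × (n → ℝ) × ℝ →L[ℝ] ℝ := .fst ℝ ℝ _
  let v : ℝ × (n → ℝ) × ℝ →L[ℝ] n → ℝ := .comp (.fst ℝ _ ℝ) (.snd ℝ ℝ _)
  let μ : ℝ × (n → ℝ) × ℝ →L[ℝ] ℝ := .comp (.snd ℝ _ ℝ) (.snd ℝ ℝ _)
  let mulVecL (A : Matrix n n ℝ) : (n → ℝ) →L[ℝ] n → ℝ :=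
    LinearMap.toContinuousLinearMap A.mulVecLin
  have hS := ((mulVecL S).comp v).hasStrictFDerivAt (x := q₀)
  have hM := ε.hasStrictFDerivAt.smul ((mulVecL M).comp v).hasStrictFDerivAt (x := q₀)
  have hμv := μ.hasStrictFDerivAt.smul v.hasStrictFDerivAt (x := q₀)
  have hvv := HasStrictFDerivAt.sum (u := Finset.univ) fun i _ =>
    (((ContinuousLinearMap.proj i).comp v).hasStrictFDerivAt (x := q₀)).mul
      ((ContinuousLinearMap.proj i).comp v).hasStrictFDerivAt
  have h := (((hS.add hM).sub hμv).prodMk (hvv.sub_const 1))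
  refine (h.congr_fderiv ?_).congr_of_eventuallyEq (.of_forall fun q => ?_)
  · ext d <;> simp [q₀, ε, v, μ, mulVecL, dotProduct, two_mul, Finset.sum_add_distrib]
  · simp [eigenEquation, ε, v, μ, mulVecL, add_mulVec, smul_mulVec, dotProduct]

/-- Injectivity of the bordered operator `(u, c) ↦ ((S - μ₀) u - c v₀, v₀ ⬝ᵥ u)`; for an
eigenpair `(μ₀, v₀)` this says that `μ₀` is an algebraically simple eigenvalue. -/
def IsSimpleEigenpair (S : Matrix n n ℝ) (μ₀ : ℝ) (v₀ : n → ℝ) : Prop :=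
  ∀ (u : n → ℝ) (c : ℝ), S *ᵥ u - μ₀ • u = c • v₀ → v₀ ⬝ᵥ u = 0 → u = 0 ∧ c = 0

theorem isInvertible_eigenEquationDeriv_comp_inr {S M : Matrix n n ℝ} {v₀ : n → ℝ} {μ₀ : ℝ}
    (hsimple : IsSimpleEigenpair S μ₀ v₀) :
    (eigenEquationDeriv S M v₀ μ₀ ∘L .inr ℝ ℝ _).IsInvertible := by
  set L := eigenEquationDeriv S M v₀ μ₀ ∘L .inr ℝ ℝ _
  have hinj : Function.Injective L := by
    refine (injective_iff_map_eq_zero L).mpr fun ⟨u, c⟩ hL => ?_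
    simp only [L, ContinuousLinearMap.comp_apply, ContinuousLinearMap.inr_apply,
      eigenEquationDeriv_apply, zero_smul, zero_add, Prod.mk_eq_zero, mul_eq_zero,
      two_ne_zero, false_or, sub_eq_zero] at hL
    obtain ⟨rfl, rfl⟩ := hsimple u c hL.1 hL.2
    rfl
  have hbij : Function.Bijective (L : (n → ℝ) × ℝ →ₗ[ℝ] (n → ℝ) × ℝ) :=
    ⟨hinj, LinearMap.injective_iff_surjective.mp hinj⟩
  exact ⟨(LinearEquiv.ofBijective _ hbij).toContinuousLinearEquiv, rfl⟩

theorem exists_eigenpair_branch {S M : Matrix n n ℝ} {v₀ w : n → ℝ} {μ₀ μ₁ : ℝ}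
    (hv₀ : v₀ ⬝ᵥ v₀ = 1) (hS : S *ᵥ v₀ = μ₀ • v₀)
    (hsimple : IsSimpleEigenpair S μ₀ v₀)
    -- `(w, μ₁)` solves `(S + ε • M) v = μ v`, `v ⬝ᵥ v = 1` linearized at `ε = 0`
    (hw : S *ᵥ w - μ₀ • w - μ₁ • v₀ = -(M *ᵥ v₀)) (hw₀ : v₀ ⬝ᵥ w = 0) :
    ∃ v : ℝ → n → ℝ, ∃ μ : ℝ → ℝ, v 0 = v₀ ∧ μ 0 = μ₀ ∧ HasDerivAt v w 0 ∧
      ∀ᶠ ε in 𝓝 0, v ε ⬝ᵥ v ε = 1 ∧ (S + ε • M) *ᵥ v ε = μ ε • v ε := by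
  have hD := hasStrictFDerivAt_eigenEquation S M v₀ μ₀
  have hinv := isInvertible_eigenEquationDeriv_comp_inr (M := M) hsimple
  set ν := hD.implicitFunctionOfProdDomain hinv
  have hν₀ : ν 0 = (v₀, μ₀) :=
    (hD.eventually_apply_eq_iff_implicitFunctionOfProdDomain hinv).self_of_nhds.mp rfl
  have hν' : HasDerivAt ν (w, μ₁) 0 := by
    refine (hD.hasStrictFDerivAt_implicitFunctionOfProdDomain hinv).hasFDerivAt.hasDerivAt
      |>.congr_deriv ?_
    change -(eigenEquationDeriv S M v₀ μ₀ ∘L .inr ℝ ℝ _).inverse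
      (eigenEquationDeriv S M v₀ μ₀ (1, 0)) = (w, μ₁)
    rw [neg_eq_iff_eq_neg, hinv.inverse_apply_eq]
    simp only [eigenEquationDeriv_apply, ContinuousLinearMap.comp_apply,
      ContinuousLinearMap.inr_apply, Prod.fst_zero, Prod.snd_zero, Prod.neg_mk, one_smul,
      zero_smul, zero_add, add_zero, sub_zero, smul_zero, mulVec_zero, mulVec_neg, smul_neg,
      sub_neg_eq_add, neg_smul, dotProduct_zero, dotProduct_neg, hw₀, neg_zero, mul_zero,
      Prod.mk.injEq, and_true]
    rw [← neg_neg (M *ᵥ v₀), ← hw]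
    module
  have hzero : eigenEquation S M (0, v₀, μ₀) = 0 := by
    simp [eigenEquation, hS, hv₀]
  refine ⟨fun ε => (ν ε).1, fun ε => (ν ε).2, congrArg Prod.fst hν₀, congrArg Prod.snd hν₀,
    (hasFDerivAt_fst (p := ν 0)).comp_hasDerivAt (0 : ℝ) hν', ?_⟩
  filter_upwards [hD.eventually_apply_implicitFunctionOfProdDomain hinv] with ε hε
  rw [hzero] at hε
  simp only [eigenEquation, Prod.mk_eq_zero, sub_eq_zero] at hε
  exact hε.symm

def spectralSum (lam : n → ℝ) (γ : n → n → ℝ) : Matrix n n ℝ :=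
  ∑ ℓ, lam ℓ • vecMulVec (γ ℓ) (γ ℓ)

theorem spectralSum_mulVec (lam : n → ℝ) (γ : n → n → ℝ) (u : n → ℝ) :
    spectralSum lam γ *ᵥ u = ∑ ℓ, (lam ℓ * (γ ℓ ⬝ᵥ u)) • γ ℓ := by
  simp [spectralSum, sum_mulVec, smul_mulVec, vecMulVec_mulVec, mul_smul]

section Spectral

variable [DecidableEq n] {γ : n → n → ℝ}

theorem eq_of_forall_dotProduct_eq
    (horth : ∀ i j, γ i ⬝ᵥ γ j = if i = j then (1 : ℝ) else 0) {u v : n → ℝ}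
    (h : ∀ m, γ m ⬝ᵥ u = γ m ⬝ᵥ v) : u = v := by
  have hQ : of γ * (of γ)ᵀ = 1 := by
    ext i j
    rw [mul_apply', one_apply]
    exact horth i j
  have hQu : of γ *ᵥ u = of γ *ᵥ v := funext h
  simpa [mulVec_mulVec, mul_eq_one_comm.mp hQ] using congrArg ((of γ)ᵀ *ᵥ ·) hQu

theorem dotProduct_sum_smul
    (horth : ∀ i j, γ i ⬝ᵥ γ j = if i = j then (1 : ℝ) else 0) (s : Finset n) (c : n → ℝ)
    (m : n) : γ m ⬝ᵥ ∑ ℓ ∈ s, c ℓ • γ ℓ = if m ∈ s then c m else 0 := by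
  simp [dotProduct_sum, dotProduct_smul, horth]

theorem spectralSum_mulVec_self
    (horth : ∀ i j, γ i ⬝ᵥ γ j = if i = j then (1 : ℝ) else 0) (lam : n → ℝ) (j : n) :
    spectralSum lam γ *ᵥ γ j = lam j • γ j := by
  simp [spectralSum_mulVec, horth]

theorem dotProduct_spectralSum_mulVec
    (horth : ∀ i j, γ i ⬝ᵥ γ j = if i = j then (1 : ℝ) else 0) (lam : n → ℝ) (m : n)
    (u : n → ℝ) : γ m ⬝ᵥ spectralSum lam γ *ᵥ u = lam m * (γ m ⬝ᵥ u) := by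
  simp [spectralSum_mulVec, dotProduct_sum_smul horth]

theorem isSimpleEigenpair_spectralSum
    (horth : ∀ i j, γ i ⬝ᵥ γ j = if i = j then (1 : ℝ) else 0) {lam : n → ℝ}
    (hlam : Function.Injective lam) (j : n) :
    IsSimpleEigenpair (spectralSum lam γ) (lam j) (γ j) := by
  intro u c hu hu₀
  have hcoord (m : n) : (lam m - lam j) * (γ m ⬝ᵥ u) = if m = j then c else 0 := by
    have := congrArg (γ m ⬝ᵥ ·) hu
    simp only [dotProduct_sub, dotProduct_smul, dotProduct_spectralSum_mulVec horth, horth,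
      smul_eq_mul, mul_ite, mul_one, mul_zero] at this
    rw [← this]
    ring
  have hc : c = 0 := by simpa using (hcoord j).symm
  refine ⟨eq_of_forall_dotProduct_eq horth fun m => ?_, hc⟩
  by_cases hm : m = j
  · rw [hm, hu₀, dotProduct_zero]
  · have := hcoord m
    rw [if_neg hm, mul_eq_zero, sub_eq_zero] at this
    rw [this.resolve_left (hlam.ne hm), dotProduct_zero]

/-- `(γⱼ ⬝ᵥ x) • Mⱼ *ᵥ x` with `Mⱼ = (λⱼ I - Σ)⁺`. -/
noncomputable def eigenvectorDeriv (lam : n → ℝ) (γ : n → n → ℝ) (x : n → ℝ) (j : n) :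
    n → ℝ :=
  ∑ ℓ ∈ Finset.univ.erase j, ((γ j ⬝ᵥ x) * (γ ℓ ⬝ᵥ x) / (lam j - lam ℓ)) • γ ℓ

theorem dotProduct_eigenvectorDeriv
    (horth : ∀ i j, γ i ⬝ᵥ γ j = if i = j then (1 : ℝ) else 0) (lam : n → ℝ) (x : n → ℝ)
    (j m : n) :
    γ m ⬝ᵥ eigenvectorDeriv lam γ x j =
      if m = j then 0 else (γ j ⬝ᵥ x) * (γ m ⬝ᵥ x) / (lam j - lam m) := by
  by_cases hm : m = j <;> simp [eigenvectorDeriv, dotProduct_sum_smul horth, hm]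

theorem eigenvectorDeriv_dotProduct_self
    (horth : ∀ i j, γ i ⬝ᵥ γ j = if i = j then (1 : ℝ) else 0) (lam : n → ℝ) (x : n → ℝ)
    (j : n) :
    eigenvectorDeriv lam γ x j ⬝ᵥ eigenvectorDeriv lam γ x j =
      (γ j ⬝ᵥ x) ^ 2 * ∑ ℓ ∈ Finset.univ.erase j, (γ ℓ ⬝ᵥ x) ^ 2 / (lam j - lam ℓ) ^ 2 := by
  conv_lhs => enter [1]; rw [eigenvectorDeriv]
  rw [sum_dotProduct, Finset.mul_sum]
  refine Finset.sum_congr rfl fun ℓ hℓ => ?_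
  rw [smul_dotProduct, dotProduct_eigenvectorDeriv horth, if_neg (Finset.ne_of_mem_erase hℓ),
    smul_eq_mul, ← div_pow]
  ring

theorem spectralSum_mulVec_eigenvectorDeriv
    (horth : ∀ i j, γ i ⬝ᵥ γ j = if i = j then (1 : ℝ) else 0) {lam : n → ℝ}
    (hlam : Function.Injective lam) (x : n → ℝ) (j : n) :
    spectralSum lam γ *ᵥ eigenvectorDeriv lam γ x j - lam j • eigenvectorDeriv lam γ x j
        - ((γ j ⬝ᵥ x) ^ 2 - lam j) • γ j =
      -((vecMulVec x x - spectralSum lam γ) *ᵥ γ j) := by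
  refine eq_of_forall_dotProduct_eq horth fun m => ?_
  simp only [dotProduct_sub, dotProduct_smul, dotProduct_neg, sub_mulVec, vecMulVec_mulVec,
    op_smul_eq_smul, dotProduct_spectralSum_mulVec horth, dotProduct_eigenvectorDeriv horth, horth,
    smul_eq_mul, dotProduct_comm x]
  by_cases hm : m = j
  · subst hm
    simp only [if_true]
    ring
  · have hgap : lam j - lam m ≠ 0 := sub_ne_zero.mpr (hlam.ne (Ne.symm hm))
    simp only [if_neg hm]
    field_simp
    ring

end Spectral

end Matrix

theorem stmt4_general (p : ℕ)
    (lam : Fin p → ℝ) (γ : Fin p → Fin p → ℝ)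
    (hanti : StrictAnti lam)
    (horth : ∀ i j, γ i ⬝ᵥ γ j = if i = j then (1 : ℝ) else 0)
    (Sig : Matrix (Fin p) (Fin p) ℝ)
    (hSig : Sig = ∑ ℓ, lam ℓ • vecMulVec (γ ℓ) (γ ℓ))
    (x : Fin p → ℝ) (j : Fin p) :
    ∃ ε₀ > (0 : ℝ), ∃ μ : ℝ → ℝ, ∃ v : ℝ → Fin p → ℝ,
      μ 0 = lam j ∧ v 0 = γ j ∧
      (∀ ε ∈ Set.Ico (0 : ℝ) ε₀,
        v ε ⬝ᵥ v ε = 1 ∧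
        ((1 - ε) • Sig + ε • vecMulVec x x).mulVec (v ε) = μ ε • v ε) ∧
      (fun ε : ℝ => γ j ⬝ᵥ v ε -
          (1 - ε ^ 2 / 2 * (γ j ⬝ᵥ x) ^ 2 *
            ∑ ℓ ∈ Finset.univ.erase j, (γ ℓ ⬝ᵥ x) ^ 2 / (lam j - lam ℓ) ^ 2))
        =o[𝓝[>] (0 : ℝ)] fun ε => ε ^ 2 := by
  change Sig = spectralSum lam γ at hSig
  subst hSig
  obtain ⟨v, μ, hv₀, hμ₀, hv', heig⟩ :=
    exists_eigenpair_branch (M := vecMulVec x x - spectralSum lam γ) (by simp [horth])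
      (spectralSum_mulVec_self horth lam j)
      (isSimpleEigenpair_spectralSum horth hanti.injective j)
      (spectralSum_mulVec_eigenvectorDeriv horth hanti.injective x j)
      (by simp [dotProduct_eigenvectorDeriv horth])
  obtain ⟨ε₀, hε₀, hball⟩ := Metric.eventually_nhds_iff.mp heig
  refine ⟨ε₀, hε₀, μ, v, hμ₀, hv₀, fun ε hε => ?_, ?_⟩
  · have hA : (1 - ε) • spectralSum lam γ + ε • vecMulVec x x =
        spectralSum lam γ + ε • (vecMulVec x x - spectralSum lam γ) := by module
    rw [hA]
    exact hball (by rw [Real.dist_0_eq_abs, abs_of_nonneg hε.1]; exact hε.2)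
  · have h := hv'.isLittleO_dotProduct_apply_zero_sub (heig.mono fun _ h => h.1)
    simp only [hv₀, eigenvectorDeriv_dotProduct_self horth, ← mul_assoc] at h
    exact h.mono nhdsWithin_le_nhds

/-- Theorem 2 (PCA part): eigenvector perturbation of `A(ε) = (1-ε)Σ + ε x xᵀ`.
There is an eigenvalue/unit-eigenvector branch `(μ(ε), v(ε))` with `μ(0) = λⱼ`,
`v(0) = γⱼ` such that
`γⱼᵀ v(ε) = 1 - (ε²/2)(γⱼᵀx)² ∑_{ℓ≠j} (γ_ℓᵀx)²/(λⱼ-λ_ℓ)² + o(ε²)` as `ε → 0⁺`. -/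
theorem stmt4 (p : ℕ) (hp : 0 < p)
    (lam : Fin p → ℝ) (γ : Fin p → Fin p → ℝ)
    (hpos : ∀ ℓ, 0 < lam ℓ) (hanti : StrictAnti lam)
    (horth : ∀ i j, γ i ⬝ᵥ γ j = if i = j then (1 : ℝ) else 0)
    (Sig : Matrix (Fin p) (Fin p) ℝ)
    (hSig : Sig = ∑ ℓ, lam ℓ • vecMulVec (γ ℓ) (γ ℓ))
    (x : Fin p → ℝ) (j : Fin p) :
    ∃ ε₀ > (0 : ℝ), ∃ μ : ℝ → ℝ, ∃ v : ℝ → Fin p → ℝ,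
      μ 0 = lam j ∧ v 0 = γ j ∧
      (∀ ε ∈ Set.Ico (0 : ℝ) ε₀,
        v ε ⬝ᵥ v ε = 1 ∧
        ((1 - ε) • Sig + ε • vecMulVec x x).mulVec (v ε) = μ ε • v ε) ∧
      (fun ε : ℝ => γ j ⬝ᵥ v ε -
          (1 - ε ^ 2 / 2 * (γ j ⬝ᵥ x) ^ 2 *
            ∑ ℓ ∈ Finset.univ.erase j, (γ ℓ ⬝ᵥ x) ^ 2 / (lam j - lam ℓ) ^ 2))
        =o[𝓝[>] (0 : ℝ)] fun ε => ε ^ 2 :=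
  stmt4_general p lam γ hanti horth Sig hSig x j
end

section
/- There exist ε₀ > 0 and functions μ₁, …, μ_p : [0, ε₀) → ℝ with μ_ℓ(0) = λ_ℓ for each ℓ and such that for every ε ∈ [0, ε₀) the characteristic polynomial of A(ε) equals ∏_{ℓ=1}^p (X − μ_ℓ(ε)) (i.e., μ₁(ε), …, μ_p(ε) are the eigenvalues of A(ε) with multiplicity), and for every pair (j,k) with j ≤ r < k ≤ p, as ε → 0⁺, μⱼ(ε)/(μⱼ(ε) + μₖ(ε)) = ρ_{jk} + ε η_{jk}(dⱼ − dₖ) + o(ε). (This is the PCA part of Theorem 3(a): the first-order perturbation of the relative eigenvalue ratio ρ_{jk}.) -/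
/-
In the orthonormal eigenbasis of `Σ` the contaminated covariance becomes
`(1 - ε) Λ + ε v vᵀ` with `vᵢ = γᵢᵀ x`, whose characteristic polynomial at `t` is the secular
function `F(ε, t) = ∏ᵢ (t - (1 - ε) λᵢ) - ε ∑ᵢ vᵢ² ∏_{j ≠ i} (t - (1 - ε) λⱼ)`.
At `(0, λ_ℓ)` one has `∂ₜF = ∏_{j ≠ ℓ} (λ_ℓ - λⱼ) ≠ 0` because the spectrum is simple and
`∂_εF = (λ_ℓ - v_ℓ²) ∂ₜF`, so the implicit function theorem gives a root branch `μ_ℓ` with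
`μ_ℓ(0) = λ_ℓ` and `μ_ℓ'(0) = v_ℓ² - λ_ℓ = λ_ℓ (d_ℓ - 1)`. For small `ε` the `p` branches stay
distinct, so they are all the eigenvalues of `A(ε)`, and the quotient rule turns these
derivatives into the first-order term `η_{jk} (dⱼ - dₖ)` of `μⱼ / (μⱼ + μₖ)`.
-/

open Matrix Asymptotics Filter Topology
open Polynomial

theorem HasStrictFDerivAt.exists_hasDerivAt_implicit {𝕜 : Type*} [NontriviallyNormedField 𝕜]
    [CompleteSpace 𝕜] {f : 𝕜 × 𝕜 → 𝕜} {L : 𝕜 × 𝕜 →L[𝕜] 𝕜} {u : 𝕜 × 𝕜}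
    (hf : HasStrictFDerivAt f L u) (hL : L (0, 1) ≠ 0) :
    ∃ ψ : 𝕜 → 𝕜, ψ u.1 = u.2 ∧ HasDerivAt ψ (-(L (1, 0) / L (0, 1))) u.1 ∧
      ∀ᶠ x in 𝓝 u.1, f (x, ψ x) = f u := by
  set c := L (0, 1)
  have hA : L ∘L .inr 𝕜 𝕜 𝕜 = c • .id 𝕜 𝕜 := by
    ext
    simp [c]
  have hright : (L ∘L .inr 𝕜 𝕜 𝕜) ∘L (c⁻¹ • .id 𝕜 𝕜) = .id 𝕜 𝕜 := by
    ext
    simp [hA, hL]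
  have hleft : (c⁻¹ • .id 𝕜 𝕜) ∘L (L ∘L .inr 𝕜 𝕜 𝕜) = .id 𝕜 𝕜 := by
    ext
    simp [hA, hL]
  have hinv : (L ∘L .inr 𝕜 𝕜 𝕜).IsInvertible := .of_inverse hright hleft
  refine ⟨hf.implicitFunctionOfProdDomain hinv, ?_, ?_,
    hf.eventually_apply_implicitFunctionOfProdDomain hinv⟩
  · exact ((hf.eventually_apply_eq_iff_implicitFunctionOfProdDomain hinv).self_of_nhds).mp rfl
  · have h := (hf.hasStrictFDerivAt_implicitFunctionOfProdDomain hinv).hasStrictDerivAt.hasDerivAt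
    rw [ContinuousLinearMap.inverse_eq hright hleft] at h
    simpa [c, div_eq_inv_mul] using h

theorem Filter.eventually_injective_of_tendsto {ι X Y : Type*} [Finite ι] [TopologicalSpace Y]
    [T2Space Y] {l : Filter X} {f : ι → X → Y} {c : ι → Y} (hc : Function.Injective c)
    (hf : ∀ i, Tendsto (f i) l (𝓝 (c i))) :
    ∀ᶠ x in l, Function.Injective fun i => f i x := by
  have hne : ∀ᶠ x in l, ∀ i j, i ≠ j → f i x ≠ f j x := by
    refine eventually_all.2 fun i => eventually_all.2 fun j => ?_
    by_cases hij : i = j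
    · exact .of_forall fun _ h => absurd hij h
    · filter_upwards [((hf i).prodMk_nhds (hf j)).eventually
        ((isOpen_ne_fun continuous_fst continuous_snd).mem_nhds (hc.ne hij))] with x hx _ using hx
  filter_upwards [hne] with x hx i j hij
  by_contra h
  exact hx i j h hij

theorem Polynomial.eq_prod_X_sub_C_of_isRoot {K ι : Type*} [Field K] [Fintype ι] {q : K[X]}
    (hq : q.Monic) (hdeg : q.natDegree = Fintype.card ι) {μ : ι → K}
    (hμ : Function.Injective μ) (hroot : ∀ i, q.IsRoot (μ i)) :
    q = ∏ i, (X - C (μ i)) := by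
  classical
  have hdvd : (∏ i, (X - C (μ i))) ∣ q :=
    Finset.prod_dvd_of_coprime ((pairwise_coprime_X_sub_C hμ).set_pairwise _)
      fun i _ => dvd_iff_isRoot.2 (hroot i)
  refine eq_of_monic_of_dvd_of_natDegree_le (monic_prod_of_monic _ _ fun i _ =>
    monic_X_sub_C _) hq hdvd ?_
  rw [hdeg, natDegree_prod _ _ fun i _ => X_sub_C_ne_zero _]
  simp

theorem Matrix.charpoly_diagonal_add_vecMulVec {n K : Type*} [Fintype n] [DecidableEq n]
    [Field K] [Infinite K] (d a b : n → K) :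
    (diagonal d + vecMulVec a b).charpoly =
      ∏ i, (X - C (d i)) - ∑ i, C (a i * b i) * ∏ j ∈ Finset.univ.erase i, (X - C (d j)) := by
  -- Off the finitely many points `t = d i` the matrix determinant lemma applies.
  refine eq_of_infinite_eval_eq _ _ ((Set.finite_range d).infinite_compl.mono fun t ht => ?_)
  have htd : ∀ i, t - d i ≠ 0 := fun i h => ht ⟨i, (sub_eq_zero.1 h).symm⟩
  have hunit : IsUnit (diagonal fun i => t - d i).det := by
    simpa [det_diagonal, isUnit_iff_ne_zero, Finset.prod_ne_zero_iff] using htd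
  have hmat : scalar n t - (diagonal d + vecMulVec a b) =
      diagonal (fun i => t - d i) + replicateCol Unit (-a) * replicateRow Unit b := by
    rw [← vecMulVec_eq, neg_vecMulVec, ← sub_eq_add_neg, scalar_apply, sub_add_eq_sub_sub,
      diagonal_sub]
  have hinv : (diagonal fun i => t - d i)⁻¹ = diagonal fun i => (t - d i)⁻¹ :=
    inv_eq_right_inv (by simp [htd])
  rw [Set.mem_ofPred_eq, eval_charpoly, hmat, det_add_replicateCol_mul_replicateRow hunit,
    det_unique (n := Unit), hinv]
  simp only [det_diagonal, PUnit.default_eq_unit, add_apply, one_apply_eq, mul_apply,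
    replicateRow_apply, diagonal_apply, mul_ite, mul_zero, Finset.sum_ite_eq', Finset.mem_univ,
    ↓reduceIte, replicateCol_apply, Pi.neg_apply, mul_neg, Finset.sum_neg_distrib, map_mul,
    eval_sub, eval_prod, eval_X, eval_C, eval_finsetSum, eval_mul]
  rw [← sub_eq_add_neg, mul_sub, mul_one, Finset.mul_sum]
  congr 1
  refine Finset.sum_congr rfl fun i _ => ?_
  rw [← Finset.mul_prod_erase _ _ (Finset.mem_univ i)]
  field_simp [htd i]

theorem Matrix.charpoly_transpose_mul_mul {n R : Type*} [Fintype n] [DecidableEq n] [CommRing R]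
    {Q : Matrix n n R} (hQ : Q * Qᵀ = 1) (M : Matrix n n R) :
    (Qᵀ * M * Q).charpoly = M.charpoly := by
  rw [charpoly_mul_comm, ← Matrix.mul_assoc, hQ, Matrix.one_mul]

/-- `secularFun lam (v ^ 2) (ε, t)` is the characteristic polynomial of
`(1 - ε) • diagonal lam + ε • vecMulVec v v`, evaluated at `t`. -/
noncomputable def secularFun {ι : Type*} [Fintype ι] [DecidableEq ι] (lam w : ι → ℝ)
    (q : ℝ × ℝ) : ℝ :=
  ∏ i, (q.2 - (1 - q.1) * lam i) -
    q.1 * ∑ i, w i * ∏ j ∈ Finset.univ.erase i, (q.2 - (1 - q.1) * lam j)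

theorem hasStrictFDerivAt_secularFun {ι : Type*} [Fintype ι] [DecidableEq ι]
    (lam w : ι → ℝ) (ℓ : ι) :
    HasStrictFDerivAt (secularFun lam w)
      ((∏ j ∈ Finset.univ.erase ℓ, (lam ℓ - lam j)) •
        (.snd ℝ ℝ ℝ + (lam ℓ - w ℓ) • .fst ℝ ℝ ℝ)) (0, lam ℓ) := by
  set ψ : ι → ℝ × ℝ → ℝ := fun j q => q.2 - (1 - q.1) * lam j
  set P := ∏ j ∈ Finset.univ.erase ℓ, (lam ℓ - lam j)
  have hψ : ∀ j, HasStrictFDerivAt (ψ j) (.snd ℝ ℝ ℝ + lam j • .fst ℝ ℝ ℝ) (0, lam ℓ) := by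
    intro j
    have hψj : ψ j = fun q => (ContinuousLinearMap.snd ℝ ℝ ℝ + lam j • .fst ℝ ℝ ℝ) q - lam j := by
      funext q
      simp only [ψ, _root_.add_apply, _root_.smul_apply,
        ContinuousLinearMap.coe_fst', ContinuousLinearMap.coe_snd', smul_eq_mul]
      ring
    rw [hψj]
    exact (ContinuousLinearMap.hasStrictFDerivAt _).sub_const _
  -- The factor `t - (1 - ε) * lam ℓ` vanishes at `(0, lam ℓ)`, so only the terms of the
  -- product rule in which it is differentiated survive.
  have hvanish : ∀ i ≠ ℓ, ∏ j ∈ Finset.univ.erase i, ψ j (0, lam ℓ) = 0 := fun i hi =>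
    Finset.prod_eq_zero (Finset.mem_erase.2 ⟨Ne.symm hi, Finset.mem_univ ℓ⟩) (by simp [ψ])
  have hsum : ∀ c : ι → ℝ × ℝ →L[ℝ] ℝ,
      ∑ i, (∏ j ∈ Finset.univ.erase i, ψ j (0, lam ℓ)) • c i = P • c ℓ := by
    intro c
    rw [Finset.sum_eq_single ℓ (fun i _ hi => by rw [hvanish i hi, zero_smul]) (by simp)]
    simp [ψ, P]
  have hS : ∑ i, w i * ∏ j ∈ Finset.univ.erase i, ψ j (0, lam ℓ) = P * w ℓ := by
    rw [Finset.sum_eq_single ℓ (fun i _ hi => by rw [hvanish i hi, mul_zero]) (by simp)]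
    simp [ψ, P, mul_comm]
  have hprod := HasStrictFDerivAt.finsetProd (u := Finset.univ) fun j _ => hψ j
  have hS' := HasStrictFDerivAt.fun_sum (u := Finset.univ) fun i _ =>
    (HasStrictFDerivAt.finsetProd (u := Finset.univ.erase i) fun j _ => hψ j).const_mul (w i)
  refine HasStrictFDerivAt.congr_fderiv (f := secularFun lam w)
    (hprod.sub (hasStrictFDerivAt_fst.mul hS')) ?_
  rw [hsum, hS]
  ext
  · simp [mul_sub]
  · simp

theorem exists_hasDerivAt_secularFun_root {ι : Type*} [Fintype ι] [DecidableEq ι]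
    (lam w : ι → ℝ) (hlam : Function.Injective lam) (ℓ : ι) :
    ∃ ν : ℝ → ℝ, ν 0 = lam ℓ ∧ HasDerivAt ν (w ℓ - lam ℓ) 0 ∧
      ∀ᶠ ε in 𝓝 0, secularFun lam w (ε, ν ε) = 0 := by
  have hP : ∏ j ∈ Finset.univ.erase ℓ, (lam ℓ - lam j) ≠ 0 :=
    Finset.prod_ne_zero_iff.2 fun j hj => sub_ne_zero.2 (hlam.ne (Finset.ne_of_mem_erase hj).symm)
  have hzero : secularFun lam w (0, lam ℓ) = 0 := by
    simp [secularFun, Finset.prod_eq_zero (Finset.mem_univ ℓ)]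
  obtain ⟨ν, hν0, hνd, hνroot⟩ :=
    (hasStrictFDerivAt_secularFun lam w ℓ).exists_hasDerivAt_implicit (by simpa using hP)
  refine ⟨ν, hν0, ?_, by simpa [hzero] using hνroot⟩
  simp only [_root_.smul_apply, _root_.add_apply, ContinuousLinearMap.coe_snd',
    ContinuousLinearMap.coe_fst', smul_eq_mul, mul_one, mul_zero, zero_add, add_zero,
    mul_div_cancel_left₀ _ hP, neg_sub] at hνd
  exact hνd

theorem eval_charpoly_contamination_eq_secularFun {ι : Type*} [Fintype ι] [DecidableEq ι]
    (lam : ι → ℝ) (γ : ι → ι → ℝ) (horth : ∀ i j, γ i ⬝ᵥ γ j = if i = j then (1 : ℝ) else 0)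
    (Sig : Matrix ι ι ℝ) (hSig : Sig = ∑ ℓ, lam ℓ • vecMulVec (γ ℓ) (γ ℓ)) (x : ι → ℝ)
    (ε t : ℝ) :
    ((1 - ε) • Sig + ε • vecMulVec x x).charpoly.eval t =
      secularFun lam (fun i => (γ i ⬝ᵥ x) ^ 2) (ε, t) := by
  set Q : Matrix ι ι ℝ := Matrix.of γ
  have hQ : Q * Qᵀ = 1 := by
    ext i j
    simpa [Q, mul_apply, one_apply, dotProduct] using horth i j
  have hSig' : Sig = Qᵀ * diagonal lam * Q := by
    ext i j
    simp only [hSig, Q, Matrix.sum_apply, Matrix.smul_apply, vecMulVec_apply, smul_eq_mul,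
      mul_apply, transpose_apply, of_apply, diagonal_apply, mul_ite, mul_zero, Finset.sum_ite_eq',
      Finset.mem_univ, ↓reduceIte]
    exact Finset.sum_congr rfl fun _ _ => by ring
  have hx : vecMulVec x x = Qᵀ * vecMulVec (Q *ᵥ x) (Q *ᵥ x) * Q := by
    rw [mul_vecMulVec, vecMulVec_mul, ← mulVec_transpose, mulVec_mulVec, mul_eq_one_comm.1 hQ,
      one_mulVec]
  have hA : (1 - ε) • Sig + ε • vecMulVec x x =
      Qᵀ * (diagonal ((1 - ε) • lam) + vecMulVec (ε • (Q *ᵥ x)) (Q *ᵥ x)) * Q := by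
    rw [hSig', hx, diagonal_smul, smul_vecMulVec, Matrix.mul_add, Matrix.add_mul, Matrix.mul_smul,
      Matrix.smul_mul, Matrix.mul_smul, Matrix.smul_mul]
  rw [hA, charpoly_transpose_mul_mul hQ, charpoly_diagonal_add_vecMulVec]
  simp only [Pi.smul_apply, smul_eq_mul, map_mul, eval_sub, eval_prod, eval_X, eval_mul,
    eval_C, eval_finsetSum, secularFun, Finset.mul_sum, sub_right_inj]
  exact Finset.sum_congr rfl fun _ _ => by simp only [Q, mulVec, of_apply]; ring

theorem isLittleO_div_add_sub_of_hasDerivAt {f g : ℝ → ℝ} {a b wa wb : ℝ}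
    (hf : HasDerivAt f (wa - a) 0) (hg : HasDerivAt g (wb - b) 0) (hf0 : f 0 = a)
    (hg0 : g 0 = b) (ha : 0 < a) (hb : 0 < b) :
    (fun ε => f ε / (f ε + g ε) -
        (a / (a + b) + ε * (a / (a + b) * (1 - a / (a + b))) * (wa / a - wb / b)))
      =o[𝓝[>] 0] fun ε => ε := by
  have hab : f 0 + g 0 ≠ 0 := by rw [hf0, hg0]; positivity
  have hratio := hasDerivAt_iff_isLittleO.1 (hf.div (hf.add hg) hab)
  refine (hratio.mono nhdsWithin_le_nhds).congr' (.of_forall fun ε => ?_)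
    (.of_forall fun ε => sub_zero ε)
  simp only [Pi.div_apply, Pi.add_apply, hf0, hg0, sub_zero, smul_eq_mul]
  field_simp
  ring

theorem stmt6_general (p r : ℕ)
    (lam : Fin p → ℝ) (γ : Fin p → Fin p → ℝ)
    (hpos : ∀ ℓ, 0 < lam ℓ) (hanti : StrictAnti lam)
    (horth : ∀ i j, γ i ⬝ᵥ γ j = if i = j then (1 : ℝ) else 0)
    (Sig : Matrix (Fin p) (Fin p) ℝ)
    (hSig : Sig = ∑ ℓ, lam ℓ • vecMulVec (γ ℓ) (γ ℓ))
    (x : Fin p → ℝ) :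
    ∃ ε₀ > (0 : ℝ), ∃ μ : Fin p → ℝ → ℝ,
      (∀ ℓ, μ ℓ 0 = lam ℓ) ∧
      (∀ ε ∈ Set.Ico (0 : ℝ) ε₀,
        ((1 - ε) • Sig + ε • vecMulVec x x).charpoly
          = ∏ ℓ, (Polynomial.X - Polynomial.C (μ ℓ ε))) ∧
      ∀ j k : Fin p, (j : ℕ) < r → r ≤ (k : ℕ) →
        (fun ε : ℝ => μ j ε / (μ j ε + μ k ε) -
            (lam j / (lam j + lam k) +
              ε * (lam j / (lam j + lam k) * (1 - lam j / (lam j + lam k))) *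
                ((γ j ⬝ᵥ x) ^ 2 / lam j - (γ k ⬝ᵥ x) ^ 2 / lam k)))
          =o[𝓝[>] (0 : ℝ)] fun ε => ε := by
  choose μ hμ0 hμd hμroot using
    exists_hasDerivAt_secularFun_root lam (fun i => (γ i ⬝ᵥ x) ^ 2) hanti.injective
  have hinj : ∀ᶠ ε in 𝓝 0, Function.Injective fun ℓ => μ ℓ ε :=
    eventually_injective_of_tendsto hanti.injective fun ℓ =>
      hμ0 ℓ ▸ (hμd ℓ).continuousAt.tendsto
  obtain ⟨ε₀, hε₀, hsub⟩ := mem_nhdsGE_iff_exists_Ico_subset.1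
    (nhdsWithin_le_nhds ((eventually_all.2 hμroot).and hinj))
  refine ⟨ε₀, hε₀, μ, hμ0, fun ε hε => ?_, fun j k _ _ =>
    isLittleO_div_add_sub_of_hasDerivAt (hμd j) (hμd k) (hμ0 j) (hμ0 k) (hpos j) (hpos k)⟩
  obtain ⟨hroot, hinjε⟩ := hsub hε
  refine Polynomial.eq_prod_X_sub_C_of_isRoot (charpoly_monic _) (by simp) hinjε fun ℓ => ?_
  rw [IsRoot, eval_charpoly_contamination_eq_secularFun lam γ horth Sig hSig]
  exact hroot ℓ

/-- Theorem 3(a), PCA part: the eigenvalues `μ_ℓ(ε)` of `A(ε) = (1-ε)Σ + ε x xᵀ`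
(as roots with multiplicity of its characteristic polynomial, with `μ_ℓ(0) = λ_ℓ`)
satisfy, for `j ≤ r < k`,
`μⱼ(ε)/(μⱼ(ε)+μₖ(ε)) = ρ_{jk} + ε η_{jk}(dⱼ - dₖ) + o(ε)` as `ε → 0⁺`. -/
theorem stmt6 (p r : ℕ) (hr : 1 ≤ r) (hrp : r < p)
    (lam : Fin p → ℝ) (γ : Fin p → Fin p → ℝ)
    (hpos : ∀ ℓ, 0 < lam ℓ) (hanti : StrictAnti lam)
    (horth : ∀ i j, γ i ⬝ᵥ γ j = if i = j then (1 : ℝ) else 0)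
    (Sig : Matrix (Fin p) (Fin p) ℝ)
    (hSig : Sig = ∑ ℓ, lam ℓ • vecMulVec (γ ℓ) (γ ℓ))
    (x : Fin p → ℝ) :
    ∃ ε₀ > (0 : ℝ), ∃ μ : Fin p → ℝ → ℝ,
      (∀ ℓ, μ ℓ 0 = lam ℓ) ∧
      (∀ ε ∈ Set.Ico (0 : ℝ) ε₀,
        ((1 - ε) • Sig + ε • vecMulVec x x).charpoly
          = ∏ ℓ, (Polynomial.X - Polynomial.C (μ ℓ ε))) ∧
      ∀ j k : Fin p, (j : ℕ) < r → r ≤ (k : ℕ) →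
        (fun ε : ℝ => μ j ε / (μ j ε + μ k ε) -
            (lam j / (lam j + lam k) +
              ε * (lam j / (lam j + lam k) * (1 - lam j / (lam j + lam k))) *
                ((γ j ⬝ᵥ x) ^ 2 / lam j - (γ k ⬝ᵥ x) ^ 2 / lam k)))
          =o[𝓝[>] (0 : ℝ)] fun ε => ε :=
  stmt6_general p r lam γ hpos hanti horth Sig hSig x
end

section
/- Let p ≥ 2, let 1 ≤ r < p, let λ₁ > λ₂ > … > λ_p > 0 be real numbers and let d₁, …, d_p ≥ 0. Then (1/(r(p−r))) Σ_{j=1}^r Σ_{k=r+1}^p Σ_{ℓ=1}^p λ_ℓ d_ℓ ( dₖ/(λ_ℓ+λₖ) − dⱼ/(λ_ℓ+λⱼ) ) = (1/2) (Σ_{ℓ=1}^p d_ℓ) · Δ + (p/(2 r (p−r))) Σ_{j=1}^r Σ_{k=r+1}^p ((λⱼ−λₖ)/(λⱼ+λₖ)) dⱼ dₖ, where Δ = (Σ_{k=r+1}^p dₖ)/(p−r) − (Σ_{j=1}^r dⱼ)/r. (This is the algebraic identity behind Theorem 3(b): the leading ε²-coefficient of the total improvement τ(x) of PPCA over PCA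 equals (1/2)(xᵀΣ⁻¹x)(Δ(x)+Δ'(x)), since xᵀΣ⁻¹x = Σ_ℓ d_ℓ and Δ'(x) = (p Σ_{j≤r}Σ_{k>r} ((λⱼ−λₖ)/(λⱼ+λₖ)) dⱼ dₖ)/(r(p−r) Σ_ℓ d_ℓ).) -/
/-- Theorem 3(b), algebraic identity: the leading `ε²`-coefficient of the total
improvement `τ(x)` equals `(1/2)(∑_ℓ d_ℓ)(Δ + Δ')`. -/
theorem stmt9 (p r : ℕ) (hp : 2 ≤ p) (hr : 1 ≤ r) (hrp : r < p)
    (lam d : Fin p → ℝ)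
    (hpos : ∀ ℓ, 0 < lam ℓ) (hanti : StrictAnti lam)
    (hd : ∀ ℓ, 0 ≤ d ℓ) :
    (1 / ((r : ℝ) * ((p : ℝ) - r))) *
      ∑ j ∈ Finset.univ.filter (fun j : Fin p => (j : ℕ) < r),
        ∑ k ∈ Finset.univ.filter (fun k : Fin p => r ≤ (k : ℕ)),
          ∑ ℓ, lam ℓ * d ℓ * (d k / (lam ℓ + lam k) - d j / (lam ℓ + lam j))
    = (1 / 2) * (∑ ℓ, d ℓ) *
        ((∑ k ∈ Finset.univ.filter (fun k : Fin p => r ≤ (k : ℕ)), d k) / ((p : ℝ) - r) -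
         (∑ j ∈ Finset.univ.filter (fun j : Fin p => (j : ℕ) < r), d j) / (r : ℝ)) +
      ((p : ℝ) / (2 * (r : ℝ) * ((p : ℝ) - r))) *
        ∑ j ∈ Finset.univ.filter (fun j : Fin p => (j : ℕ) < r),
          ∑ k ∈ Finset.univ.filter (fun k : Fin p => r ≤ (k : ℕ)),
            (lam j - lam k) / (lam j + lam k) * d j * d k := by
  classical
  set A := Finset.univ.filter (fun j : Fin p => (j : ℕ) < r) with hAdef
  set B := Finset.univ.filter (fun k : Fin p => r ≤ (k : ℕ)) with hBdef
  have hsum0 : ∀ ℓ k : Fin p, lam ℓ + lam k ≠ 0 := fun ℓ k =>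
    ne_of_gt (add_pos (hpos ℓ) (hpos k))
  -- w and its properties
  set w : Fin p → Fin p → ℝ :=
    fun ℓ k => (lam ℓ - lam k) / (lam ℓ + lam k) * d ℓ * d k with hwdef
  have hw_anti : ∀ ℓ k : Fin p, w k ℓ = - w ℓ k := by
    intro ℓ k
    simp only [hwdef]
    rw [add_comm (lam k)]
    ring
  -- cardinalities
  have hcA : (A.card : ℝ) = r := by
    have h1 : A = Finset.Iio (⟨r, hrp⟩ : Fin p) := by
      ext j; simp [hAdef, Fin.lt_def]
    rw [h1, Fin.card_Iio]
  have hcB : (B.card : ℝ) = (p : ℝ) - r := by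
    have hBA : B = Finset.univ.filter (fun k : Fin p => ¬ ((k : ℕ) < r)) := by
      ext k; simp [hBdef, not_lt]
    have h2 : A.card + B.card = p := by
      rw [hBA, hAdef, Finset.card_filter_add_card_filter_not]
      simp
    have h3 : (A.card : ℝ) + (B.card : ℝ) = p := by exact_mod_cast h2
    linarith [hcA]
  -- splitting a sum over univ into A and B
  have hsplit : ∀ g : Fin p → ℝ, ∑ ℓ, g ℓ = ∑ ℓ ∈ A, g ℓ + ∑ ℓ ∈ B, g ℓ := by
    intro g
    have hBA : B = Finset.univ.filter (fun k : Fin p => ¬ ((k : ℕ) < r)) := by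
      ext k; simp [hBdef, not_lt]
    rw [hBA, hAdef, Finset.sum_filter_add_sum_filter_not]
  -- antisymmetric double sums over the same set vanish
  have hcancel : ∀ s : Finset (Fin p), ∑ k ∈ s, ∑ ℓ ∈ s, w ℓ k = 0 := by
    intro s
    have h1 : ∑ k ∈ s, ∑ ℓ ∈ s, w ℓ k = ∑ k ∈ s, ∑ ℓ ∈ s, w k ℓ := Finset.sum_comm
    have h2 : ∑ k ∈ s, ∑ ℓ ∈ s, w k ℓ = - ∑ k ∈ s, ∑ ℓ ∈ s, w ℓ k := by
      rw [← Finset.sum_neg_distrib]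
      refine Finset.sum_congr rfl fun k _ => ?_
      rw [← Finset.sum_neg_distrib]
      exact Finset.sum_congr rfl fun ℓ _ => hw_anti ℓ k
    linarith [h1.trans h2]
  set S := ∑ ℓ, d ℓ with hSdef
  set W : Fin p → ℝ := fun k => ∑ ℓ, w ℓ k with hWdef
  -- pointwise identity
  have ptw : ∀ ℓ k : Fin p, lam ℓ * d ℓ * (d k / (lam ℓ + lam k)) =
      d ℓ * d k / 2 + w ℓ k / 2 := by
    intro ℓ k
    have h := hsum0 ℓ k
    simp only [hwdef]
    field_simp
    ring
  -- the innermost sum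
  have inner : ∀ j k : Fin p,
      ∑ ℓ, lam ℓ * d ℓ * (d k / (lam ℓ + lam k) - d j / (lam ℓ + lam j))
      = (S * d k / 2 + W k / 2) - (S * d j / 2 + W j / 2) := by
    intro j k
    have hpt : ∀ ℓ : Fin p,
        lam ℓ * d ℓ * (d k / (lam ℓ + lam k) - d j / (lam ℓ + lam j))
        = (d ℓ * d k / 2 + w ℓ k / 2) - (d ℓ * d j / 2 + w ℓ j / 2) := by
      intro ℓ; rw [mul_sub, ptw, ptw]
    rw [Finset.sum_congr rfl fun ℓ _ => hpt ℓ]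
    simp only [Finset.sum_sub_distrib, Finset.sum_add_distrib, ← Finset.sum_div,
      ← Finset.sum_mul, hSdef, hWdef]
  -- W sums over A and B
  have hWB : ∑ k ∈ B, W k = ∑ k ∈ B, ∑ ℓ ∈ A, w ℓ k := by
    have : ∀ k : Fin p, W k = ∑ ℓ ∈ A, w ℓ k + ∑ ℓ ∈ B, w ℓ k := fun k =>
      hsplit (fun ℓ => w ℓ k)
    rw [Finset.sum_congr rfl fun k _ => this k, Finset.sum_add_distrib,
      hcancel B, add_zero]
  have hWA : ∑ j ∈ A, W j = - ∑ j ∈ A, ∑ k ∈ B, w j k := by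
    have h1 : ∀ j : Fin p, W j = ∑ ℓ ∈ A, w ℓ j + ∑ ℓ ∈ B, w ℓ j := fun j =>
      hsplit (fun ℓ => w ℓ j)
    rw [Finset.sum_congr rfl fun j _ => h1 j, Finset.sum_add_distrib]
    have h2 : ∑ j ∈ A, ∑ ℓ ∈ A, w ℓ j = 0 := hcancel A
    have h3 : ∑ j ∈ A, ∑ ℓ ∈ B, w ℓ j = - ∑ j ∈ A, ∑ k ∈ B, w j k := by
      rw [← Finset.sum_neg_distrib]
      refine Finset.sum_congr rfl fun j _ => ?_
      rw [← Finset.sum_neg_distrib]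
      exact Finset.sum_congr rfl fun ℓ _ => hw_anti j ℓ
    rw [h2, h3, zero_add]
  -- P via sum_comm
  have hPcomm : ∑ k ∈ B, ∑ ℓ ∈ A, w ℓ k = ∑ j ∈ A, ∑ k ∈ B, w j k :=
    Finset.sum_comm
  -- the double sum
  have hdouble :
      ∑ j ∈ A, ∑ k ∈ B, ∑ ℓ, lam ℓ * d ℓ * (d k / (lam ℓ + lam k) - d j / (lam ℓ + lam j))
      = (r : ℝ) * (S * (∑ k ∈ B, d k) / 2 + (∑ j ∈ A, ∑ k ∈ B, w j k) / 2)
        - ((p : ℝ) - r) * (S * (∑ j ∈ A, d j) / 2 - (∑ j ∈ A, ∑ k ∈ B, w j k) / 2) := by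
    rw [Finset.sum_congr rfl fun j _ => Finset.sum_congr rfl fun k _ => inner j k]
    simp only [Finset.sum_sub_distrib, Finset.sum_const, nsmul_eq_mul,
      Finset.sum_add_distrib, ← Finset.sum_div, ← Finset.mul_sum]
    rw [hWB, hWA, hPcomm, hcA, hcB]
    ring
  -- finish
  have hrne : (r : ℝ) ≠ 0 := by positivity
  have hprne : (p : ℝ) - r ≠ 0 := by
    have : (r : ℝ) < p := by exact_mod_cast hrp
    linarith
  rw [hdouble]
  have hRW : ∑ j ∈ A, ∑ k ∈ B, (lam j - lam k) / (lam j + lam k) * d j * d k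
      = ∑ j ∈ A, ∑ k ∈ B, w j k := by
    simp only [hwdef]
  rw [hRW]
  field_simp
  ring
end
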